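/- Key graph lemma: let G be a finite simple graph on vertex set V with independence number α, and f : V → ℝ nonnegative. Then ∑_y min(f(y), ∑_{x ~ y} f(x)) + α·max_v f(v) ≥ ∑_v f(v). -/

import Mathlib

open Finset

/-- The independence number of a finite simple graph. -/
def indepNum {V : Type*} [Fintype V] [DecidableEq V] (G : SimpleGraph V) [DecidableRel G.Adj] : ℕ :=
  Finset.univ.powerset.sup fun s =>
    if ∀ x ∈ s, ∀ y ∈ s, ¬ G.Adj x y then s.card else 0

/-!
Let `A` be the set of vertices `y` with `∑_{x ~ y} f x < f y`. Two such vertices cannot be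
adjacent, since each would carry at most the neighbourhood sum of the other, so `|A| ≤ α`.
Outside `A` the minimum is `f y`, inside it is nonnegative, and the missing mass `∑_{y ∈ A} f y`
is at most `|A| · max f ≤ α · max f`.
-/

theorem Finset.sum_le_sum_min_add_sum_filter_lt {ι β : Type*} [AddCommGroup β] [LinearOrder β]
    [IsOrderedAddMonoid β] (s : Finset ι) {f g : ι → β} (hg : ∀ i ∈ s, 0 ≤ g i) :
    ∑ i ∈ s, f i ≤ ∑ i ∈ s, min (f i) (g i) + ∑ i ∈ s with g i < f i, f i := by
  have hmin_nonneg : 0 ≤ ∑ i ∈ s with g i < f i, min (f i) (g i) :=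
    sum_nonneg fun i hi => by
      rw [mem_filter] at hi
      rw [min_eq_right hi.2.le]
      exact hg i hi.1
  have hmin_eq : ∑ i ∈ s with ¬ g i < f i, min (f i) (g i) = ∑ i ∈ s with ¬ g i < f i, f i :=
    sum_congr rfl fun i hi => min_eq_left (not_lt.1 (mem_filter.1 hi).2)
  calc ∑ i ∈ s, f i
      = ∑ i ∈ s with ¬ g i < f i, f i + ∑ i ∈ s with g i < f i, f i := by
        rw [add_comm, sum_filter_add_sum_filter_not]
    _ ≤ ∑ i ∈ s, min (f i) (g i) + ∑ i ∈ s with g i < f i, f i := by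
        rw [← sum_filter_add_sum_filter_not s (fun i => g i < f i), hmin_eq]
        gcongr
        exact le_add_of_nonneg_left hmin_nonneg

theorem card_le_indepNum {V : Type*} [Fintype V] [DecidableEq V] (G : SimpleGraph V)
    [DecidableRel G.Adj] {s : Finset V} (hs : G.IsIndepSet s) :
    s.card ≤ indepNum G := by
  refine le_trans ?_ (le_sup (f := fun s : Finset V =>
    if ∀ x ∈ s, ∀ y ∈ s, ¬ G.Adj x y then s.card else 0) (mem_powerset.2 (subset_univ s)))
  rw [if_pos fun x hx y hy hxy => hs (mem_coe.2 hx) (mem_coe.2 hy) hxy.ne hxy]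

namespace SimpleGraph

variable {V : Type*} [Fintype V] (G : SimpleGraph V) [DecidableRel G.Adj]

theorem isIndepSet_filter_sum_neighborFinset_lt {f : V → ℝ} (hf : ∀ v, 0 ≤ f v) :
    G.IsIndepSet (univ.filter fun y => ∑ x ∈ G.neighborFinset y, f x < f y : Finset V) := by
  intro x hx y hy _ hxy
  simp only [coe_filter, mem_univ, true_and, Set.mem_ofPred_eq] at hx hy
  have hyx : f y ≤ ∑ z ∈ G.neighborFinset x, f z :=
    single_le_sum (fun z _ => hf z) ((G.mem_neighborFinset x y).2 hxy)
  have hxy' : f x ≤ ∑ z ∈ G.neighborFinset y, f z :=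
    single_le_sum (fun z _ => hf z) ((G.mem_neighborFinset y x).2 hxy.symm)
  linarith

end SimpleGraph

theorem graph_key_lemma
    {V : Type*} [Fintype V] [DecidableEq V] [Nonempty V]
    (G : SimpleGraph V) [DecidableRel G.Adj]
    (f : V → ℝ) (hf : ∀ v, 0 ≤ f v) :
    (∑ y, min (f y) (∑ x ∈ G.neighborFinset y, f x)) +
      (indepNum G : ℝ) * Finset.univ.sup' Finset.univ_nonempty f
      ≥ ∑ v, f v := by
  set M := univ.sup' univ_nonempty f
  set A := univ.filter fun y => ∑ x ∈ G.neighborFinset y, f x < f y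
  have hfM : ∀ v, f v ≤ M := fun v => le_sup' f (mem_univ v)
  have hA : A.card ≤ indepNum G :=
    card_le_indepNum G (G.isIndepSet_filter_sum_neighborFinset_lt hf)
  calc ∑ v, f v ≤ ∑ y, min (f y) (∑ x ∈ G.neighborFinset y, f x) + ∑ y ∈ A, f y :=
        univ.sum_le_sum_min_add_sum_filter_lt fun y _ => sum_nonneg fun x _ => hf x
    _ ≤ ∑ y, min (f y) (∑ x ∈ G.neighborFinset y, f x) + A.card • M := by
        gcongr
        exact sum_le_card_nsmul A f M fun v _ => hfM v
    _ ≤ ∑ y, min (f y) (∑ x ∈ G.neighborFinset y, f x) + (indepNum G : ℝ) * M := by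
        rw [nsmul_eq_mul]
        gcongr
        exact (hf (Classical.arbitrary V)).trans (hfM _)
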